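/- arXiv:1301.1518 — 5 statements merged into one kernel-verified Lean document; each statement's English description precedes it below -/
import Mathlib

section
/- The derivation d maps the two-sided ideal J_K into itself: d(J_K) ⊆ J_K. Consequently d descends to a well-defined degree-1 differential on the quotient algebra R/𝓘_K = ℤ⟨u_1,…,u_m,t_1,…,t_m⟩/J_K. -/
/-!
STATEMENT 2: The (unique) degree-1 graded derivation `d` of the free noncommutative
`ℤ`-algebra `ℤ⟨u_1,…,u_m,t_1,…,t_m⟩` with `d(u_i) = 0`, `d(t_i) = u_i`, `d(1) = 0`
maps the two-sided ideal `J_K` into itself, and consequently descends to a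
well-defined differential on the quotient `R/𝓘_K`.

We model the generators by `Fin m ⊕ Fin m`, with `u i = ι (inl i)`, `t i = ι (inr i)`,
and `d` by an arbitrary `ℤ`-linear endomorphism satisfying the defining properties
(`d(u_i) = 0`, `d(t_i) = u_i`, `d(1) = 0` and the graded Leibniz rule on homogeneous
elements); the conclusion is stated for every such `d`.
-/

variable (m : ℕ)

/-- The free noncommutative `ℤ`-algebra on `u_1,…,u_m,t_1,…,t_m`. -/
abbrev FA (m : ℕ) : Type := FreeAlgebra ℤ (Fin m ⊕ Fin m)

/-- The generator `u i` (of degree `1`). -/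
def ugen {m : ℕ} (i : Fin m) : FA m := FreeAlgebra.ι ℤ (Sum.inl i)

/-- The generator `t i` (of degree `0`). -/
def tgen {m : ℕ} (i : Fin m) : FA m := FreeAlgebra.ι ℤ (Sum.inr i)

/-- The product `u_{i_1} ⋯ u_{i_k}` over `σ = {i_1 < ⋯ < i_k}`. -/
def uprod {m : ℕ} (σ : Finset (Fin m)) : FA m :=
  ((σ.sort (· ≤ ·)).map (fun i => ugen i)).prod

/-- The generating set of the ideal `J_K`: the commutation/square relations together
with the Stanley–Reisner monomials `u_σ`, `σ ∉ K`. -/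
def gens {m : ℕ} (K : Finset (Finset (Fin m))) : Set (FA m) :=
  {x | (∃ i, x = ugen i * tgen i - ugen i) ∨
       (∃ i, x = tgen i * ugen i) ∨
       (∃ i, x = tgen i * tgen i - tgen i) ∨
       (∃ i, x = ugen i * ugen i) ∨
       (∃ i j, i ≠ j ∧ x = ugen i * tgen j - tgen j * ugen i) ∨
       (∃ i j, i ≠ j ∧ x = ugen i * ugen j + ugen j * ugen i) ∨
       (∃ i j, i ≠ j ∧ x = tgen i * tgen j - tgen j * tgen i) ∨
       (∃ σ : Finset (Fin m), σ ∉ K ∧ x = uprod σ)}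

/-- The two-sided ideal `J_K` generated by `gens K`, as the additive span of the
elements `a * g * b` with `g` a generator. -/
def JK {m : ℕ} (K : Finset (Finset (Fin m))) : Submodule ℤ (FA m) :=
  Submodule.span ℤ {x | ∃ a g b, g ∈ gens K ∧ x = a * g * b}

/-- The homogeneous elements of degree `n` of the free algebra (where `u i` has
degree `1` and `t i` has degree `0`): the `ℤ`-span of the words whose number of
`u`-letters is `n`. -/
def homog {m : ℕ} (n : ℕ) : Submodule ℤ (FA m) :=
  Submodule.span ℤ
    {x | ∃ l : List (Fin m ⊕ Fin m),
      (l.filter Sum.isLeft).length = n ∧ x = (l.map (FreeAlgebra.ι ℤ)).prod}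

/-!
For homogeneous `a` and `g`, the graded Leibniz rule gives
`d(a g b) = d(a) g b ± a d(g) b ± a g d(b)`, so `d(a g b) ∈ J` whenever `g ∈ J` and `d g ∈ J`.
The rule only applies to homogeneous left factors, but the set of `a` with `d(a y) ∈ J` for all
`y` with `y, d y ∈ J` is closed under sums and products and contains the scalars and the
(homogeneous) letters, hence is everything. So `d` preserves the ideal generated by homogeneous
elements as soon as it maps each generator into the ideal, which for `J_K` is a direct check:
`d(u_i t_i - u_i) = -u_i²`, `d(t_i² - t_i) = (u_i t_i - u_i) + t_i u_i`,
`d(t_i t_j - t_j t_i) = (u_i t_j - t_j u_i) - (u_j t_i - t_i u_j)`, and so on, while `d` kills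
every monomial in the `u`'s.
-/

variable {m}

def idealSpan {A : Type*} [Ring A] (S : Set A) : Submodule ℤ A :=
  Submodule.span ℤ {x | ∃ a g b, g ∈ S ∧ x = a * g * b}

section IdealSpan

variable {A : Type*} [Ring A] {S : Set A}

theorem subset_idealSpan : S ⊆ idealSpan S := fun g hg =>
  Submodule.subset_span ⟨1, g, 1, hg, by simp⟩

theorem mul_mul_mem_idealSpan (a b : A) {x : A} (hx : x ∈ idealSpan S) :
    a * x * b ∈ idealSpan S := by
  induction hx using Submodule.span_induction with
  | mem x hx =>
    obtain ⟨a', g, b', hg, rfl⟩ := hx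
    exact Submodule.subset_span ⟨a * a', g, b' * b, hg, by simp only [mul_assoc]⟩
  | zero => simp
  | add x y _ _ hx hy => simpa only [mul_add, add_mul] using add_mem hx hy
  | smul r x _ hx =>
    rw [mul_smul_comm, smul_mul_assoc]
    exact Submodule.smul_mem _ r hx

theorem mul_mem_idealSpan_left (a : A) {x : A} (hx : x ∈ idealSpan S) : a * x ∈ idealSpan S := by
  simpa using mul_mul_mem_idealSpan a 1 hx

theorem mul_mem_idealSpan_right (b : A) {x : A} (hx : x ∈ idealSpan S) : x * b ∈ idealSpan S := by
  simpa using mul_mul_mem_idealSpan 1 b hx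

end IdealSpan

theorem mul_mem_homog {n k : ℕ} {x y : FA m} (hx : x ∈ homog n) (hy : y ∈ homog k) :
    x * y ∈ homog (n + k) := by
  induction hx using Submodule.span_induction with
  | mem x hx =>
    obtain ⟨l, rfl, rfl⟩ := hx
    induction hy using Submodule.span_induction with
    | mem y hy =>
      obtain ⟨l', rfl, rfl⟩ := hy
      exact Submodule.subset_span ⟨l ++ l', by simp, by simp⟩
    | zero => simp
    | add y y' _ _ hy hy' => simpa only [mul_add] using add_mem hy hy'
    | smul r y _ hy =>
      rw [mul_smul_comm]
      exact Submodule.smul_mem _ r hy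
  | zero => simp
  | add x x' _ _ hx hx' => simpa only [add_mul] using add_mem hx hx'
  | smul r x _ hx =>
    rw [smul_mul_assoc]
    exact Submodule.smul_mem _ r hx

theorem one_mem_homog_zero : (1 : FA m) ∈ homog 0 :=
  Submodule.subset_span ⟨[], rfl, by simp⟩

theorem ι_mem_homog (x : Fin m ⊕ Fin m) :
    FreeAlgebra.ι ℤ x ∈ homog (if x.isLeft then 1 else 0) :=
  Submodule.subset_span ⟨[x], by cases x <;> rfl, by simp⟩

theorem ugen_mem_homog (i : Fin m) : ugen i ∈ homog 1 := ι_mem_homog (Sum.inl i)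

theorem tgen_mem_homog (i : Fin m) : tgen i ∈ homog 0 := ι_mem_homog (Sum.inr i)

theorem prod_map_ugen_mem_homog (l : List (Fin m)) : (l.map ugen).prod ∈ homog l.length := by
  induction l with
  | nil => exact one_mem_homog_zero
  | cons i l ih =>
    rw [List.map_cons, List.prod_cons, List.length_cons, add_comm]
    exact mul_mem_homog (ugen_mem_homog i) ih

theorem uprod_mem_homog (σ : Finset (Fin m)) : uprod σ ∈ homog σ.card := by
  rw [uprod, ← Finset.length_sort (· ≤ ·)]
  exact prod_map_ugen_mem_homog _

theorem exists_mem_homog_of_mem_gens {K : Finset (Finset (Fin m))} {g : FA m} (hg : g ∈ gens K) :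
    ∃ n, g ∈ homog n := by
  have hu := ugen_mem_homog (m := m)
  have ht := tgen_mem_homog (m := m)
  rcases hg with ⟨i, rfl⟩ | ⟨i, rfl⟩ | ⟨i, rfl⟩ | ⟨i, rfl⟩ | ⟨i, j, -, rfl⟩ | ⟨i, j, -, rfl⟩ |
    ⟨i, j, -, rfl⟩ | ⟨σ, -, rfl⟩
  · exact ⟨_, sub_mem (mul_mem_homog (hu i) (ht i)) (hu i)⟩
  · exact ⟨_, mul_mem_homog (ht i) (hu i)⟩
  · exact ⟨_, sub_mem (mul_mem_homog (ht i) (ht i)) (ht i)⟩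
  · exact ⟨_, mul_mem_homog (hu i) (hu i)⟩
  · have hut := mul_mem_homog (hu i) (ht j)
    have htu := mul_mem_homog (ht j) (hu i)
    exact ⟨1, sub_mem hut htu⟩
  · exact ⟨_, add_mem (mul_mem_homog (hu i) (hu j)) (mul_mem_homog (hu j) (hu i))⟩
  · exact ⟨_, sub_mem (mul_mem_homog (ht i) (ht j)) (mul_mem_homog (ht j) (ht i))⟩
  · exact ⟨_, uprod_mem_homog σ⟩

def IsGradedDerivation (d : FA m →ₗ[ℤ] FA m) : Prop :=
  ∀ (n : ℕ), ∀ x ∈ homog (m := m) n, ∀ y : FA m, d (x * y) = d x * y + ((-1 : ℤ) ^ n) • (x * d y)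

namespace IsGradedDerivation

variable {d : FA m →ₗ[ℤ] FA m} (hd : IsGradedDerivation d)
include hd

theorem map_one : d 1 = 0 := by
  simpa using hd 0 1 one_mem_homog_zero 1

theorem map_mul_mem_idealSpan {S : Set (FA m)} (a : FA m) {y : FA m} (hy : y ∈ idealSpan S)
    (hdy : d y ∈ idealSpan S) : d (a * y) ∈ idealSpan S := by
  induction a using FreeAlgebra.induction generalizing y with
  | grade0 r =>
    rw [Algebra.algebraMap_eq_smul_one, smul_one_mul, map_smul]
    exact Submodule.smul_mem _ r hdy
  | grade1 x =>
    rw [hd _ _ (ι_mem_homog x)]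
    exact add_mem (mul_mem_idealSpan_left _ hy)
      (Submodule.smul_mem _ _ (mul_mem_idealSpan_left _ hdy))
  | mul a b ha hb =>
    rw [mul_assoc]
    exact ha (mul_mem_idealSpan_left _ hy) (hb hy hdy)
  | add a b ha hb => simpa only [add_mul, map_add] using add_mem (ha hy hdy) (hb hy hdy)

theorem map_mem_idealSpan {S : Set (FA m)} (hS : ∀ g ∈ S, ∃ n, g ∈ homog n)
    (hdS : ∀ g ∈ S, d g ∈ idealSpan S) {x : FA m} (hx : x ∈ idealSpan S) :
    d x ∈ idealSpan S := by
  induction hx using Submodule.span_induction with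
  | mem x hx =>
    obtain ⟨a, g, b, hg, rfl⟩ := hx
    obtain ⟨n, hgn⟩ := hS g hg
    have hdgb : d (g * b) ∈ idealSpan S := by
      rw [hd n g hgn]
      exact add_mem (mul_mem_idealSpan_right _ (hdS g hg))
        (Submodule.smul_mem _ _ (mul_mem_idealSpan_right _ (subset_idealSpan hg)))
    rw [mul_assoc]
    exact hd.map_mul_mem_idealSpan a (mul_mem_idealSpan_right _ (subset_idealSpan hg)) hdgb
  | zero => simp
  | add x y _ _ hx hy => simpa only [map_add] using add_mem hx hy
  | smul r x _ hx => simpa only [map_smul] using Submodule.smul_mem _ r hx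

theorem map_ugen_mul (hdu : ∀ i, d (ugen i) = 0) (i : Fin m) (y : FA m) :
    d (ugen i * y) = -(ugen i * d y) := by
  simp [hd 1 _ (ugen_mem_homog i), hdu]

theorem map_tgen_mul (hdt : ∀ i, d (tgen i) = ugen i) (i : Fin m) (y : FA m) :
    d (tgen i * y) = ugen i * y + tgen i * d y := by
  simp [hd 0 _ (tgen_mem_homog i), hdt]

theorem map_prod_ugen (hdu : ∀ i, d (ugen i) = 0) (l : List (Fin m)) :
    d (l.map ugen).prod = 0 := by
  induction l with
  | nil => exact hd.map_one
  | cons i l ih => simp [hd.map_ugen_mul hdu, ih]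

theorem map_mem_JK_of_mem_gens (hdu : ∀ i, d (ugen i) = 0) (hdt : ∀ i, d (tgen i) = ugen i)
    {K : Finset (Finset (Fin m))} {g : FA m} (hg : g ∈ gens K) : d g ∈ JK K := by
  have gen {g : FA m} (hg : g ∈ gens K) : g ∈ JK K := subset_idealSpan hg
  rcases hg with ⟨i, rfl⟩ | ⟨i, rfl⟩ | ⟨i, rfl⟩ | ⟨i, rfl⟩ | ⟨i, j, hij, rfl⟩ | ⟨i, j, hij, rfl⟩ |
    ⟨i, j, hij, rfl⟩ | ⟨σ, -, rfl⟩
  · rw [map_sub, hd.map_ugen_mul hdu, hdt, hdu, sub_zero]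
    exact neg_mem (gen (by unfold gens; grind))
  · rw [hd.map_tgen_mul hdt, hdu, mul_zero, add_zero]
    exact gen (by unfold gens; grind)
  · rw [map_sub, hd.map_tgen_mul hdt, hdt, add_sub_right_comm]
    exact add_mem (gen (by unfold gens; grind)) (gen (by unfold gens; grind))
  · simp [hd.map_ugen_mul hdu, hdu]
  · rw [map_sub, hd.map_ugen_mul hdu, hd.map_tgen_mul hdt, hdt, hdu, mul_zero, add_zero, ← neg_add']
    exact neg_mem (gen (by unfold gens; grind))
  · simp [hd.map_ugen_mul hdu, hdu]
  · rw [map_sub, hd.map_tgen_mul hdt, hd.map_tgen_mul hdt, hdt, hdt,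
      show ugen i * tgen j + tgen i * ugen j - (ugen j * tgen i + tgen j * ugen i) =
        (ugen i * tgen j - tgen j * ugen i) - (ugen j * tgen i - tgen i * ugen j) by abel]
    exact sub_mem (gen (by unfold gens; grind)) (gen (by unfold gens; grind))
  · rw [uprod, hd.map_prod_ugen hdu]
    exact zero_mem _

end IsGradedDerivation

theorem derivation_preserves_JK_general {m : ℕ} (K : Finset (Finset (Fin m)))
    (d : FA m →ₗ[ℤ] FA m)
    (hdu : ∀ i, d (ugen i) = 0)
    (hdt : ∀ i, d (tgen i) = ugen i)
    (hleib : ∀ (n : ℕ), ∀ x ∈ homog (m := m) n, ∀ y : FA m,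
      d (x * y) = d x * y + ((-1 : ℤ) ^ n) • (x * d y)) :
    (∀ x ∈ JK K, d x ∈ JK K) ∧
    (∃! dbar : (FA m ⧸ JK K) →ₗ[ℤ] (FA m ⧸ JK K),
      dbar.comp (JK K).mkQ = (JK K).mkQ.comp d) := by
  have hd : IsGradedDerivation d := hleib
  have hJK : ∀ x ∈ JK K, d x ∈ JK K := fun _ =>
    hd.map_mem_idealSpan (fun _ => exists_mem_homog_of_mem_gens)
      (fun _ => hd.map_mem_JK_of_mem_gens hdu hdt)
  refine ⟨hJK, (JK K).mapQ (JK K) d hJK, Submodule.mapQ_mkQ _ _ _, fun dbar hdbar => ?_⟩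
  exact Submodule.linearMap_qext _ (hdbar.trans (Submodule.mapQ_mkQ _ _ _).symm)

/-- The graded derivation `d` preserves `J_K`, and hence descends to a (unique)
`ℤ`-linear differential on the quotient `R/𝓘_K = FA m ⧸ J_K`. -/
theorem derivation_preserves_JK {m : ℕ} (K : Finset (Finset (Fin m)))
    (hKempty : (∅ : Finset (Fin m)) ∈ K)
    (hKdown : ∀ σ ∈ K, ∀ τ ⊆ σ, τ ∈ K)
    (d : FA m →ₗ[ℤ] FA m)
    (hdu : ∀ i, d (ugen i) = 0)
    (hdt : ∀ i, d (tgen i) = ugen i)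
    (hd1 : d 1 = 0)
    (hleib : ∀ (n : ℕ), ∀ x ∈ homog (m := m) n, ∀ y : FA m,
      d (x * y) = d x * y + ((-1 : ℤ) ^ n) • (x * d y)) :
    (∀ x ∈ JK K, d x ∈ JK K) ∧
    (∃! dbar : (FA m ⧸ JK K) →ₗ[ℤ] (FA m ⧸ JK K),
      dbar.comp (JK K).mkQ = (JK K).mkQ.comp d) :=
  derivation_preserves_JK_general K d hdu hdt hleib
end

section
/- The set of images of the square-free monomials {u_σ t_τ : σ ∈ K, τ ⊆ [m], σ ∩ τ = ∅} is a ℤ-basis of the quotient algebra R/𝓘_K. -/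
/-- `t_τ = t_{j_1} ⋯ t_{j_l}` for `τ = {j_1 < ⋯ < j_l}`. -/
def tprodGen {m : ℕ} (τ : Finset (Fin m)) : FA m :=
  ((τ.sort (· ≤ ·)).map (fun j => tgen j)).prod

/-- The relation whose `RingQuot` is the quotient by the two-sided ideal `J_K`. -/
def relK {m : ℕ} (K : Finset (Finset (Fin m))) : FA m → FA m → Prop :=
  fun x y => x ∈ gens K ∧ y = 0

/-- The quotient algebra `R/𝓘_K`. -/
abbrev RI (m : ℕ) (K : Finset (Finset (Fin m))) : Type := RingQuot (relK (m := m) K)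

/-- The image `u_σ t_τ` of a square-free monomial in `R/𝓘_K`. -/
noncomputable def mono {m : ℕ} (K : Finset (Finset (Fin m))) (σ τ : Finset (Fin m)) :
    RI m K :=
  RingQuot.mkAlgHom ℤ (relK K) (uprod σ * tprodGen τ)

/-!
The monomials span: their ℤ-span contains `1 = u_∅ t_∅` and is stable under left multiplication
by the generators, because the relations move `u_i` or `t_i` into place (up to sign), kill the
product when `i ∈ σ` or when `u_σ` has `σ ∉ K`, and absorb `t_i` into `u_σ` when `i ∈ σ`.

They are independent because `R/𝓘_K` acts on the free ℤ-module on pairs `(σ, τ)` of finsets: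
`t_i` adds `i` to `τ` (or gives `0` if `i ∈ σ`), and `u_i` moves `i` into `σ`, removing it from
`τ`, with sign `(-1)^#{j ∈ σ | j < i}` (or gives `0` if `i ∈ σ` or the new `σ` is not a face).
The monomial `u_σ t_τ` sends `(∅, ∅)` to `(σ, τ)`.
-/

open Finset

theorem Submodule.span_eq_top_of_one_mem_of_mul_ι_mem {R X A : Type*} [CommSemiring R]
    [Semiring A] [Algebra R A] (f : FreeAlgebra R X →ₐ[R] A) (hf : Function.Surjective f)
    {s : Set A} (h1 : (1 : A) ∈ span R s)
    (hmul : ∀ x, ∀ g ∈ s, f (FreeAlgebra.ι R x) * g ∈ span R s) : span R s = ⊤ := by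
  set p := span R s
  have hmul_mem : ∀ a y, y ∈ p → f a * y ∈ p := by
    intro a
    induction a using FreeAlgebra.induction with
    | grade0 r => intro y hy; simpa [Algebra.smul_def] using p.smul_mem r hy
    | grade1 x =>
      have hle : p ≤ p.comap (LinearMap.mulLeft R (f (FreeAlgebra.ι R x))) :=
        span_le.mpr (hmul x)
      exact fun y hy => hle hy
    | mul a b ha hb => intro y hy; rw [map_mul, mul_assoc]; exact ha _ (hb y hy)
    | add a b ha hb => intro y hy; rw [map_add, add_mul]; exact p.add_mem (ha y hy) (hb y hy)
  refine eq_top_iff.mpr fun y _ => ?_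
  obtain ⟨a, rfl⟩ := hf y
  simpa using hmul_mem a 1 h1

theorem List.Perm.exists_prod_map_eq_zsmul {ι A : Type*} [Ring A] {a : ι → A}
    (ha : ∀ i j, i ≠ j → a i * a j = -(a j * a i)) {l₁ l₂ : List ι} (h : l₁.Perm l₂) :
    ∃ z : ℤ, (l₁.map a).prod = z • (l₂.map a).prod := by
  induction h with
  | nil => exact ⟨1, by simp⟩
  | cons x _ ih =>
    obtain ⟨z, hz⟩ := ih
    exact ⟨z, by simp only [List.map_cons, List.prod_cons, hz, mul_smul_comm]⟩
  | swap x y l =>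
    by_cases hxy : x = y
    · exact ⟨1, by simp [hxy]⟩
    · exact ⟨-1, by simp [← mul_assoc, ha y x (Ne.symm hxy)]⟩
  | trans _ _ ih₁ ih₂ =>
    obtain ⟨z₁, hz₁⟩ := ih₁
    obtain ⟨z₂, hz₂⟩ := ih₂
    exact ⟨z₁ * z₂, by rw [hz₁, hz₂, mul_smul]⟩

theorem Finset.sort_insert_perm {α : Type*} [LinearOrder α] {a : α} {s : Finset α}
    (h : a ∉ s) : (insert a s).sort.Perm (a :: s.sort) :=
  (List.perm_ext_iff_of_nodup (sort_nodup _ _) (by simp [h])).mpr (by simp)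

namespace RI

variable {m : ℕ} (K : Finset (Finset (Fin m)))

abbrev mk : FA m →ₐ[ℤ] RI m K := RingQuot.mkAlgHom ℤ (relK K)

theorem mk_eq_zero_of_mem_gens {x : FA m} (hx : x ∈ gens K) : mk K x = 0 := by
  simpa using RingQuot.mkAlgHom_rel ℤ (show relK K x 0 from ⟨hx, rfl⟩)

theorem mk_ugen_mul_tgen_self (i : Fin m) : mk K (ugen i) * mk K (tgen i) = mk K (ugen i) := by
  simpa [sub_eq_zero] using mk_eq_zero_of_mem_gens K (Or.inl ⟨i, rfl⟩)

theorem mk_tgen_mul_ugen_self (i : Fin m) : mk K (tgen i) * mk K (ugen i) = 0 := by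
  simpa using mk_eq_zero_of_mem_gens K (Or.inr <| Or.inl ⟨i, rfl⟩)

theorem mk_tgen_mul_tgen_self (i : Fin m) : mk K (tgen i) * mk K (tgen i) = mk K (tgen i) := by
  simpa [sub_eq_zero] using mk_eq_zero_of_mem_gens K (Or.inr <| Or.inr <| Or.inl ⟨i, rfl⟩)

theorem mk_ugen_mul_ugen_self (i : Fin m) : mk K (ugen i) * mk K (ugen i) = 0 := by
  simpa using mk_eq_zero_of_mem_gens K (Or.inr <| Or.inr <| Or.inr <| Or.inl ⟨i, rfl⟩)

theorem commute_mk_ugen_tgen {i j : Fin m} (hij : i ≠ j) :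
    Commute (mk K (ugen i)) (mk K (tgen j)) := by
  simpa [Commute, SemiconjBy, sub_eq_zero] using mk_eq_zero_of_mem_gens K
    (Or.inr <| Or.inr <| Or.inr <| Or.inr <| Or.inl ⟨i, j, hij, rfl⟩)

theorem mk_ugen_mul_ugen_of_ne {i j : Fin m} (hij : i ≠ j) :
    mk K (ugen i) * mk K (ugen j) = -(mk K (ugen j) * mk K (ugen i)) := by
  simpa [add_eq_zero_iff_eq_neg] using mk_eq_zero_of_mem_gens K
    (Or.inr <| Or.inr <| Or.inr <| Or.inr <| Or.inr <| Or.inl ⟨i, j, hij, rfl⟩)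

theorem commute_mk_tgen_tgen (i j : Fin m) : Commute (mk K (tgen i)) (mk K (tgen j)) := by
  obtain rfl | hij := eq_or_ne i j
  · exact Commute.refl _
  simpa [Commute, SemiconjBy, sub_eq_zero] using mk_eq_zero_of_mem_gens K
    (Or.inr <| Or.inr <| Or.inr <| Or.inr <| Or.inr <| Or.inr <| Or.inl ⟨i, j, hij, rfl⟩)

theorem mk_uprod_of_notMem {σ : Finset (Fin m)} (hσ : σ ∉ K) : mk K (uprod σ) = 0 :=
  mk_eq_zero_of_mem_gens K
    (Or.inr <| Or.inr <| Or.inr <| Or.inr <| Or.inr <| Or.inr <| Or.inr ⟨σ, hσ, rfl⟩)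

theorem mk_uprod (σ : Finset (Fin m)) :
    mk K (uprod σ) = (σ.sort.map fun i => mk K (ugen i)).prod := by
  simp [uprod, map_list_prod, List.map_map, Function.comp_def]

theorem mk_tprodGen (τ : Finset (Fin m)) :
    mk K (tprodGen τ) = (τ.sort.map fun i => mk K (tgen i)).prod := by
  simp [tprodGen, map_list_prod, List.map_map, Function.comp_def]

theorem mk_tprodGen_insert (i : Fin m) (τ : Finset (Fin m)) :
    mk K (tprodGen (insert i τ)) = mk K (tgen i) * mk K (tprodGen τ) := by
  have of_notMem : ∀ τ, i ∉ τ →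
      mk K (tprodGen (insert i τ)) = mk K (tgen i) * mk K (tprodGen τ) := by
    intro τ h
    rw [mk_tprodGen, mk_tprodGen, ((sort_insert_perm h).map _).prod_eq'
      (List.pairwise_map.mpr <|
        List.pairwise_of_forall_sublist fun _ => commute_mk_tgen_tgen K _ _)]
    rfl
  by_cases h : i ∈ τ
  · have h' := of_notMem (τ.erase i) (notMem_erase i τ)
    rw [insert_erase h] at h'
    rw [insert_eq_of_mem h, h', ← mul_assoc, mk_tgen_mul_tgen_self]
  · exact of_notMem τ h

theorem exists_mk_uprod_insert {i : Fin m} {σ : Finset (Fin m)} (h : i ∉ σ) :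
    ∃ z : ℤ, mk K (uprod (insert i σ)) = z • (mk K (ugen i) * mk K (uprod σ)) := by
  simpa [mk_uprod] using (sort_insert_perm h).exists_prod_map_eq_zsmul
    fun _ _ => mk_ugen_mul_ugen_of_ne K

theorem exists_mk_ugen_mul_uprod {i : Fin m} {σ : Finset (Fin m)} (h : i ∉ σ) :
    ∃ z : ℤ, mk K (ugen i) * mk K (uprod σ) = z • mk K (uprod (insert i σ)) := by
  simpa [mk_uprod] using
    (sort_insert_perm h).symm.exists_prod_map_eq_zsmul
    fun _ _ => mk_ugen_mul_ugen_of_ne K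

theorem exists_mk_uprod_eq_of_mem {i : Fin m} {σ : Finset (Fin m)} (h : i ∈ σ) :
    ∃ z : ℤ, mk K (uprod σ) = z • (mk K (ugen i) * mk K (uprod (σ.erase i))) := by
  simpa [insert_erase h] using exists_mk_uprod_insert K (notMem_erase i σ)

theorem mk_ugen_mul_uprod_of_mem {i : Fin m} {σ : Finset (Fin m)} (h : i ∈ σ) :
    mk K (ugen i) * mk K (uprod σ) = 0 := by
  obtain ⟨z, hz⟩ := exists_mk_uprod_eq_of_mem K h
  rw [hz, mul_smul_comm, ← mul_assoc, mk_ugen_mul_ugen_self, zero_mul]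
  exact smul_zero z

theorem mk_tgen_mul_uprod_of_mem {i : Fin m} {σ : Finset (Fin m)} (h : i ∈ σ) :
    mk K (tgen i) * mk K (uprod σ) = 0 := by
  obtain ⟨z, hz⟩ := exists_mk_uprod_eq_of_mem K h
  rw [hz, mul_smul_comm, ← mul_assoc, mk_tgen_mul_ugen_self, zero_mul]
  exact smul_zero z

theorem commute_mk_tgen_uprod {i : Fin m} {σ : Finset (Fin m)} (h : i ∉ σ) :
    Commute (mk K (tgen i)) (mk K (uprod σ)) := by
  rw [mk_uprod]
  refine Commute.list_prod_right _ _ fun x hx => ?_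
  obtain ⟨j, hj, rfl⟩ := List.mem_map.mp hx
  exact (commute_mk_ugen_tgen K (ne_of_mem_of_not_mem ((mem_sort _).mp hj) h)).symm

theorem mk_uprod_mul_tgen_of_mem {i : Fin m} {σ : Finset (Fin m)} (h : i ∈ σ) :
    mk K (uprod σ) * mk K (tgen i) = mk K (uprod σ) := by
  obtain ⟨z, hz⟩ := exists_mk_uprod_eq_of_mem K h
  rw [hz, smul_mul_assoc, mul_assoc, ← (commute_mk_tgen_uprod K (notMem_erase i σ)).eq,
    ← mul_assoc, mk_ugen_mul_tgen_self]

theorem mono_eq (σ τ : Finset (Fin m)) : mono K σ τ = mk K (uprod σ) * mk K (tprodGen τ) :=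
  map_mul _ _ _

theorem mono_insert_of_mem {i : Fin m} {σ : Finset (Fin m)} (h : i ∈ σ) (τ : Finset (Fin m)) :
    mono K σ (insert i τ) = mono K σ τ := by
  rw [mono_eq, mono_eq, mk_tprodGen_insert, ← mul_assoc, mk_uprod_mul_tgen_of_mem K h]

theorem mono_erase_of_mem {i : Fin m} {σ : Finset (Fin m)} (h : i ∈ σ) (τ : Finset (Fin m)) :
    mono K σ (τ.erase i) = mono K σ τ := by
  by_cases hτ : i ∈ τ
  · rw [← mono_insert_of_mem K h, insert_erase hτ]
  · rw [erase_eq_of_notMem hτ]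

theorem mono_of_notMem {σ : Finset (Fin m)} (hσ : σ ∉ K) (τ : Finset (Fin m)) :
    mono K σ τ = 0 := by
  rw [mono_eq, mk_uprod_of_notMem K hσ, zero_mul]

theorem mk_tgen_mul_mono_of_mem {i : Fin m} {σ : Finset (Fin m)} (h : i ∈ σ)
    (τ : Finset (Fin m)) : mk K (tgen i) * mono K σ τ = 0 := by
  rw [mono_eq, ← mul_assoc, mk_tgen_mul_uprod_of_mem K h, zero_mul]

theorem mk_tgen_mul_mono_of_notMem {i : Fin m} {σ : Finset (Fin m)} (h : i ∉ σ)
    (τ : Finset (Fin m)) : mk K (tgen i) * mono K σ τ = mono K σ (insert i τ) := by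
  rw [mono_eq, mono_eq, ← mul_assoc, (commute_mk_tgen_uprod K h).eq, mul_assoc,
    mk_tprodGen_insert]

theorem mk_ugen_mul_mono_of_mem {i : Fin m} {σ : Finset (Fin m)} (h : i ∈ σ)
    (τ : Finset (Fin m)) : mk K (ugen i) * mono K σ τ = 0 := by
  rw [mono_eq, ← mul_assoc, mk_ugen_mul_uprod_of_mem K h, zero_mul]

theorem exists_mk_ugen_mul_mono {i : Fin m} {σ : Finset (Fin m)} (h : i ∉ σ)
    (τ : Finset (Fin m)) :
    ∃ z : ℤ, mk K (ugen i) * mono K σ τ = z • mono K (insert i σ) (τ.erase i) := by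
  obtain ⟨z, hz⟩ := exists_mk_ugen_mul_uprod K h
  refine ⟨z, ?_⟩
  rw [mono_erase_of_mem K (mem_insert_self i σ), mono_eq, mono_eq, ← mul_assoc, hz,
    smul_mul_assoc]

abbrev Index : Type :=
  {st : Finset (Fin m) × Finset (Fin m) // st.1 ∈ K ∧ Disjoint st.1 st.2}

noncomputable def monomial (st : Index K) : RI m K := mono K st.1.1 st.1.2

theorem mono_mem_span {σ τ : Finset (Fin m)} (hσ : σ ∈ K) (hd : Disjoint σ τ) :
    mono K σ τ ∈ Submodule.span ℤ (Set.range (monomial K)) :=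
  Submodule.subset_span ⟨⟨(σ, τ), hσ, hd⟩, rfl⟩

theorem mk_tgen_mul_mono_mem_span (i : Fin m) {σ τ : Finset (Fin m)} (hσ : σ ∈ K)
    (hd : Disjoint σ τ) :
    mk K (tgen i) * mono K σ τ ∈ Submodule.span ℤ (Set.range (monomial K)) := by
  by_cases h : i ∈ σ
  · rw [mk_tgen_mul_mono_of_mem K h]
    exact zero_mem _
  · rw [mk_tgen_mul_mono_of_notMem K h]
    exact mono_mem_span K hσ (disjoint_insert_right.mpr ⟨h, hd⟩)

theorem mk_ugen_mul_mono_mem_span (i : Fin m) {σ τ : Finset (Fin m)} (hd : Disjoint σ τ) :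
    mk K (ugen i) * mono K σ τ ∈ Submodule.span ℤ (Set.range (monomial K)) := by
  by_cases h : i ∈ σ
  · rw [mk_ugen_mul_mono_of_mem K h]
    exact zero_mem _
  obtain ⟨z, hz⟩ := exists_mk_ugen_mul_mono K h τ
  rw [hz]
  refine Submodule.smul_mem _ z ?_
  by_cases hK : insert i σ ∈ K
  · exact mono_mem_span K hK
      (disjoint_insert_left.mpr ⟨notMem_erase i τ, hd.mono_right (erase_subset i τ)⟩)
  · rw [mono_of_notMem K hK]
    exact zero_mem _

theorem span_monomial_eq_top (hKempty : ∅ ∈ K) :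
    Submodule.span ℤ (Set.range (monomial K)) = ⊤ := by
  refine Submodule.span_eq_top_of_one_mem_of_mul_ι_mem (mk K)
    (RingQuot.mkAlgHom_surjective ℤ _) ?_ ?_
  · have h1 : mono K ∅ ∅ = 1 := by simp [mono, uprod, tprodGen]
    exact h1 ▸ mono_mem_span K hKempty (disjoint_empty_left ∅)
  · rintro (i | i) _ ⟨⟨⟨σ, τ⟩, hσ, hd⟩, rfl⟩
    · exact mk_ugen_mul_mono_mem_span K i hd
    · exact mk_tgen_mul_mono_mem_span K i hσ hd

abbrev PairModule (m : ℕ) : Type := Finset (Fin m) × Finset (Fin m) →₀ ℤ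

def sgn (σ : Finset (Fin m)) (i : Fin m) : ℤ := (-1) ^ #{j ∈ σ | j < i}

theorem sgn_insert {σ : Finset (Fin m)} {j : Fin m} (hj : j ∉ σ) (i : Fin m) :
    sgn (insert j σ) i = (if j < i then -1 else 1) * sgn σ i := by
  unfold sgn
  rw [filter_insert]
  split_ifs with h
  · rw [card_insert_of_notMem (by simp [hj]), pow_succ, mul_comm]
  · rw [one_mul]

theorem sgn_mul_sgn_insert {σ : Finset (Fin m)} {i j : Fin m} (hi : i ∉ σ) (hj : j ∉ σ)
    (hij : i ≠ j) : sgn σ j * sgn (insert j σ) i = -(sgn σ i * sgn (insert i σ) j) := by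
  rw [sgn_insert hj, sgn_insert hi]
  rcases hij.lt_or_gt with h | h
  · rw [if_neg h.not_gt, if_pos h]; ring
  · rw [if_pos h, if_neg h.not_gt]; ring

noncomputable def uAct (i : Fin m) (p : Finset (Fin m) × Finset (Fin m)) : PairModule m :=
  if i ∉ p.1 ∧ insert i p.1 ∈ K then Finsupp.single (insert i p.1, p.2.erase i) (sgn p.1 i)
  else 0

noncomputable def tAct (i : Fin m) (p : Finset (Fin m) × Finset (Fin m)) : PairModule m :=
  if i ∈ p.1 then 0 else Finsupp.single (p.1, insert i p.2) 1

noncomputable def uOp (i : Fin m) : Module.End ℤ (PairModule m) :=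
  Finsupp.linearCombination ℤ (uAct K i)

noncomputable def tOp (i : Fin m) : Module.End ℤ (PairModule m) :=
  Finsupp.linearCombination ℤ (tAct i)

@[simp] theorem uOp_single (i : Fin m) (p : Finset (Fin m) × Finset (Fin m)) (c : ℤ) :
    uOp K i (Finsupp.single p c) = c • uAct K i p :=
  Finsupp.linearCombination_single ℤ c p

@[simp] theorem tOp_single (i : Fin m) (p : Finset (Fin m) × Finset (Fin m)) (c : ℤ) :
    tOp i (Finsupp.single p c) = c • tAct i p :=
  Finsupp.linearCombination_single ℤ c p

theorem uOp_mul_tOp_self (i : Fin m) : uOp K i * tOp i = uOp K i := by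
  ext ⟨σ, τ⟩ : 2
  by_cases h : i ∈ σ <;> simp [tAct, uAct, h]

theorem tOp_mul_uOp_self (i : Fin m) : tOp i * uOp K i = 0 := by
  ext ⟨σ, τ⟩ : 2
  by_cases h : i ∉ σ ∧ insert i σ ∈ K <;> simp [uAct, tAct, h]

theorem tOp_mul_tOp_self (i : Fin m) : tOp (m := m) i * tOp i = tOp i := by
  ext ⟨σ, τ⟩ : 2
  by_cases h : i ∈ σ <;> simp [tAct, h]

theorem uOp_mul_uOp_self (i : Fin m) : uOp K i * uOp K i = 0 := by
  ext ⟨σ, τ⟩ : 2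
  by_cases h : i ∉ σ ∧ insert i σ ∈ K <;> simp [uAct, h]

theorem commute_uOp_tOp {i j : Fin m} (hij : i ≠ j) : Commute (uOp K i) (tOp j) := by
  ext ⟨σ, τ⟩ : 2
  by_cases hj : j ∈ σ <;> by_cases h : i ∉ σ ∧ insert i σ ∈ K <;>
    simp [tAct, uAct, hj, h, hij.symm, erase_insert_of_ne hij.symm]

theorem commute_tOp_tOp (i j : Fin m) : Commute (tOp (m := m) i) (tOp j) := by
  ext ⟨σ, τ⟩ : 2
  by_cases hi : i ∈ σ <;> by_cases hj : j ∈ σ <;> simp [tAct, hi, hj, insert_comm]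

theorem uAct_insert_eq_zero (hKdown : ∀ σ ∈ K, ∀ τ ⊆ σ, τ ∈ K) {i : Fin m}
    {σ : Finset (Fin m)} (h : ¬(i ∉ σ ∧ insert i σ ∈ K)) (j : Fin m) (τ : Finset (Fin m)) :
    uAct K i (insert j σ, τ) = 0 :=
  if_neg fun h' => h ⟨fun hi => h'.1 (mem_insert_of_mem hi),
    hKdown _ h'.2 _ (insert_subset_insert i (subset_insert j σ))⟩

theorem uOp_mul_uOp_of_ne (hKdown : ∀ σ ∈ K, ∀ τ ⊆ σ, τ ∈ K) {i j : Fin m} (hij : i ≠ j) :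
    uOp K i * uOp K j = -(uOp K j * uOp K i) := by
  ext ⟨σ, τ⟩ : 2
  simp only [LinearMap.comp_apply, Finsupp.lsingle_apply, Module.End.mul_apply,
    LinearMap.neg_apply, uOp_single, one_smul]
  rw [uAct, uAct]
  split_ifs with hj hi hi
  · by_cases hK : insert i (insert j σ) ∈ K
    · simp [uAct, hi.1, hj.1, hij, hij.symm, hK, insert_comm j i, erase_right_comm,
        sgn_mul_sgn_insert hi.1 hj.1 hij]
    · have hK' : insert j (insert i σ) ∉ K := by rwa [insert_comm]
      simp [uAct, hK, hK']
  · rw [uOp_single, uAct_insert_eq_zero K hKdown hi, map_zero, neg_zero, smul_zero]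
  · rw [uOp_single, uAct_insert_eq_zero K hKdown hj, map_zero, smul_zero, neg_zero]
  · simp

theorem uOp_mem_supported (i : Fin m) {S : Finset (Fin m)} {v : PairModule m}
    (hv : v ∈ Finsupp.supported ℤ ℤ {p | S ⊆ p.1}) :
    uOp K i v ∈ Finsupp.supported ℤ ℤ {p | insert i S ⊆ p.1 ∧ p.1 ∈ K} := by
  have hspan : uOp K i v ∈ Submodule.span ℤ (uAct K i '' {p | S ⊆ p.1}) :=
    (Finsupp.mem_span_image_iff_linearCombination ℤ).mpr ⟨v, hv, rfl⟩
  refine Submodule.span_le.mpr ?_ hspan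
  rintro _ ⟨p, hp, rfl⟩
  unfold uAct
  split_ifs with h
  · exact Finsupp.single_mem_supported ℤ _ ⟨insert_subset_insert i hp, h.2⟩
  · exact zero_mem _

theorem uprod_insert_of_forall_lt {a : Fin m} {s : Finset (Fin m)} (h : ∀ x ∈ s, a < x) :
    uprod (insert a s) = ugen a * uprod s := by
  rw [uprod, sort_insert _ (fun b hb => (h b hb).le) fun ha => lt_irrefl a (h a ha)]
  rfl

theorem tprodGen_insert_of_forall_lt {a : Fin m} {s : Finset (Fin m)} (h : ∀ x ∈ s, a < x) :
    tprodGen (insert a s) = tgen a * tprodGen s := by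
  rw [tprodGen, sort_insert _ (fun b hb => (h b hb).le) fun ha => lt_irrefl a (h a ha)]
  rfl

noncomputable def rep : FA m →ₐ[ℤ] Module.End ℤ (PairModule m) :=
  FreeAlgebra.lift ℤ (Sum.elim (uOp K) tOp)

@[simp] theorem rep_ugen (i : Fin m) : rep K (ugen i) = uOp K i := by
  simp [rep, ugen]

@[simp] theorem rep_tgen (i : Fin m) : rep K (tgen i) = tOp i := by
  simp [rep, tgen]

theorem rep_uprod_mem_supported (σ : Finset (Fin m)) (v : PairModule m) :
    rep K (uprod σ) v ∈ Finsupp.supported ℤ ℤ {p | σ ⊆ p.1} := by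
  induction σ using Finset.induction_on_min with
  | empty => simp [uprod]
  | insert a s ha ih =>
    rw [uprod_insert_of_forall_lt ha, map_mul, Module.End.mul_apply, rep_ugen]
    exact Finsupp.supported_mono (fun p hp => hp.1) (uOp_mem_supported K a ih)

theorem rep_uprod_of_notMem (hKempty : ∅ ∈ K) (hKdown : ∀ σ ∈ K, ∀ τ ⊆ σ, τ ∈ K)
    {σ : Finset (Fin m)} (hσ : σ ∉ K) : rep K (uprod σ) = 0 := by
  induction σ using Finset.induction_on_min with
  | empty => exact absurd hKempty hσ
  | insert a s ha _ =>
    refine LinearMap.ext fun v => ?_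
    have hv := uOp_mem_supported K a (rep_uprod_mem_supported K s v)
    have hempty : {p : Finset (Fin m) × Finset (Fin m) | insert a s ⊆ p.1 ∧ p.1 ∈ K} = ∅ :=
      Set.eq_empty_of_forall_notMem fun p hp => hσ (hKdown _ hp.2 _ hp.1)
    rw [hempty, Finsupp.supported_empty, Submodule.mem_bot] at hv
    rw [uprod_insert_of_forall_lt ha, map_mul, Module.End.mul_apply, rep_ugen, hv,
      LinearMap.zero_apply]

theorem rep_eq_of_relK (hKempty : ∅ ∈ K) (hKdown : ∀ σ ∈ K, ∀ τ ⊆ σ, τ ∈ K) ⦃x y : FA m⦄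
    (h : relK K x y) : rep K x = rep K y := by
  obtain ⟨hx, rfl⟩ := h
  rcases hx with ⟨i, rfl⟩ | ⟨i, rfl⟩ | ⟨i, rfl⟩ | ⟨i, rfl⟩ | ⟨i, j, hij, rfl⟩ |
    ⟨i, j, hij, rfl⟩ | ⟨i, j, hij, rfl⟩ | ⟨σ, hσ, rfl⟩
  · simp [uOp_mul_tOp_self]
  · simp [tOp_mul_uOp_self]
  · simp [tOp_mul_tOp_self]
  · simp [uOp_mul_uOp_self]
  · simp [(commute_uOp_tOp K hij).eq]
  · simp [uOp_mul_uOp_of_ne K hKdown hij]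
  · simp [(commute_tOp_tOp i j).eq]
  · simpa using rep_uprod_of_notMem K hKempty hKdown hσ

theorem rep_tprodGen_single {σ τ : Finset (Fin m)} (hd : Disjoint σ τ) :
    rep K (tprodGen τ) (Finsupp.single (σ, ∅) 1) = Finsupp.single (σ, τ) 1 := by
  induction τ using Finset.induction_on_min with
  | empty => simp [tprodGen]
  | insert a s ha ih =>
    rw [tprodGen_insert_of_forall_lt ha, map_mul, Module.End.mul_apply,
      ih (disjoint_of_subset_right (subset_insert a s) hd), rep_tgen, tOp_single, one_smul,
      tAct, if_neg (disjoint_right.mp hd (mem_insert_self a s))]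

theorem rep_uprod_single (hKdown : ∀ σ ∈ K, ∀ τ ⊆ σ, τ ∈ K) {σ τ : Finset (Fin m)}
    (hσ : σ ∈ K) (hd : Disjoint σ τ) :
    rep K (uprod σ) (Finsupp.single (∅, τ) 1) = Finsupp.single (σ, τ) 1 := by
  induction σ using Finset.induction_on_min with
  | empty => simp [uprod]
  | insert a s ha ih =>
    have has : a ∉ s := fun h => lt_irrefl a (ha a h)
    have hsgn : sgn s a = 1 := by
      simp [sgn, filter_eq_empty_iff.mpr fun x hx => (ha x hx).not_gt]
    rw [uprod_insert_of_forall_lt ha, map_mul, Module.End.mul_apply,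
      ih (hKdown _ hσ _ (subset_insert a s)) (disjoint_of_subset_left (subset_insert a s) hd),
      rep_ugen, uOp_single, one_smul, uAct, if_pos ⟨has, hσ⟩, hsgn,
      erase_eq_of_notMem (disjoint_left.mp hd (mem_insert_self a s))]

noncomputable def repQuot (hKempty : ∅ ∈ K) (hKdown : ∀ σ ∈ K, ∀ τ ⊆ σ, τ ∈ K) :
    RI m K →ₐ[ℤ] Module.End ℤ (PairModule m) :=
  RingQuot.liftAlgHom ℤ ⟨rep K, rep_eq_of_relK K hKempty hKdown⟩

theorem repQuot_mono_single (hKempty : ∅ ∈ K) (hKdown : ∀ σ ∈ K, ∀ τ ⊆ σ, τ ∈ K)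
    {σ τ : Finset (Fin m)} (hσ : σ ∈ K) (hd : Disjoint σ τ) :
    repQuot K hKempty hKdown (mono K σ τ) (Finsupp.single (∅, ∅) 1) =
      Finsupp.single (σ, τ) 1 := by
  rw [mono, repQuot, RingQuot.liftAlgHom_mkAlgHom_apply, map_mul, Module.End.mul_apply,
    rep_tprodGen_single K (disjoint_empty_left τ), rep_uprod_single K hKdown hσ hd]

theorem linearIndependent_monomial (hKempty : ∅ ∈ K) (hKdown : ∀ σ ∈ K, ∀ τ ⊆ σ, τ ∈ K) :
    LinearIndependent ℤ (monomial K) := by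
  let φ : RI m K →ₗ[ℤ] PairModule m :=
    LinearMap.applyₗ (Finsupp.single (∅, ∅) 1 : PairModule m) ∘ₗ
      (repQuot K hKempty hKdown).toLinearMap
  have hφ : φ ∘ monomial K = fun st => (Finsupp.single st.1 1 : PairModule m) :=
    funext fun st => repQuot_mono_single K hKempty hKdown st.2.1 st.2.2
  refine LinearIndependent.of_comp φ ?_
  rw [hφ]
  exact (Finsupp.linearIndependent_single_one ℤ _).comp Subtype.val Subtype.val_injective

end RI

/-- The monomials `u_σ t_τ` with `σ ∈ K` and `σ ∩ τ = ∅` form a `ℤ`-basis of `R/𝓘_K`. -/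
theorem monomials_basis_of_RI {m : ℕ} (K : Finset (Finset (Fin m)))
    (hKempty : (∅ : Finset (Fin m)) ∈ K)
    (hKdown : ∀ σ ∈ K, ∀ τ ⊆ σ, τ ∈ K) :
    ∃ B : Module.Basis {st : Finset (Fin m) × Finset (Fin m) //
        st.1 ∈ K ∧ Disjoint st.1 st.2} ℤ (RI m K),
      ∀ st, B st = mono K st.1.1 st.1.2 :=
  ⟨Module.Basis.mk (RI.linearIndependent_monomial K hKempty hKdown)
      (RI.span_monomial_eq_top K hKempty).ge,
    fun st => Module.Basis.mk_apply _ _ st⟩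
end

section
/- For every ω ⊆ [m], the ℤ-linear map λ_ω sending the basis element (σ, ω∖σ) of T(K)|_ω^p to the basis element σ* of C̃^{p−1}(K_ω) is an isomorphism of cochain complexes (of degree −1), i.e. it is bijective in each degree and commutes with the differentials; consequently it induces isomorphisms H^p(T(K)|_ω) ≅ H̃^{p−1}(K_ω) for all p. -/
/-!
STATEMENT 6: For every `ω ⊆ [m]`, the map `λ_ω` sending the basis element `(σ, ω∖σ)`
of `T(K)|_ω^p` to the basis element `σ*` of the reduced simplicial cochain group
`C̃^{p−1}(K_ω)` of the full subcomplex `K_ω = {σ ∩ ω : σ ∈ K}` is an isomorphism of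
cochain complexes (of degree `−1`): it is bijective in each degree and commutes with
the differentials; consequently `H^p(T(K)|_ω) ≅ H̃^{p−1}(K_ω)` for all `p`.

Indexing convention: the piece of index `p` of the reduced cochain complex `Ct K ω`
below has basis the simplices of `K_ω` of cardinality `p`, i.e. it is `C̃^{p−1}(K_ω)`
(the empty simplex, of cardinality `0`, sits in reduced degree `−1`).
-/

/-- Basis of `T(K)|_ω^p`: pairs `(σ,τ)`, `σ ∈ K`, `σ,τ` disjoint, `σ ∪ τ = ω`, `|σ| = p`. -/
def TωB {m : ℕ} (K : Finset (Finset (Fin m))) (ω : Finset (Fin m)) (p : ℕ) : Type :=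
  {x : Finset (Fin m) × Finset (Fin m) //
    x.1 ∈ K ∧ Disjoint x.1 x.2 ∧ x.1 ∪ x.2 = ω ∧ x.1.card = p}

noncomputable def dTωaux {m : ℕ} (K : Finset (Finset (Fin m))) (ω : Finset (Fin m)) (p : ℕ)
    (b : TωB K ω p) : (TωB K ω (p + 1) →₀ ℤ) :=
  ∑ i ∈ b.1.2.attach,
    if h : insert i.1 b.1.1 ∈ K then
      Finsupp.single
        ⟨(insert i.1 b.1.1, b.1.2.erase i.1),
          h,
          Finset.disjoint_insert_left.mpr
            ⟨Finset.notMem_erase _ _, b.2.2.1.mono_right (Finset.erase_subset _ _)⟩,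
          by rw [Finset.insert_union, ← Finset.union_insert, Finset.insert_erase i.2,
                 b.2.2.2.1],
          by
            rw [Finset.card_insert_of_notMem (Finset.disjoint_right.mp b.2.2.1 i.2),
              b.2.2.2.2]⟩
        ((-1 : ℤ) ^ (b.1.1.filter (fun j => j < i.1)).card)
    else 0

/-- The differential of the subcomplex `T(K)|_ω`. -/
noncomputable def dTω {m : ℕ} (K : Finset (Finset (Fin m))) (ω : Finset (Fin m)) (p : ℕ) :
    (TωB K ω p →₀ ℤ) →ₗ[ℤ] (TωB K ω (p + 1) →₀ ℤ) :=
  Finsupp.lift _ ℤ _ (dTωaux K ω p)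

/-- Basis of `C̃^{p−1}(K_ω)`: the simplices of `K_ω = {s ∩ ω : s ∈ K}` of cardinality `p`. -/
def CtB {m : ℕ} (K : Finset (Finset (Fin m))) (ω : Finset (Fin m)) (p : ℕ) : Type :=
  {σ : Finset (Fin m) // (∃ s ∈ K, s ∩ ω = σ) ∧ σ.card = p}

open Classical in
/-- The reduced simplicial coboundary on a basis element `σ*`:
`δ(σ*) = Σ_{i ∈ ω∖σ, σ∪{i} ∈ K_ω} (−1)^{#{j ∈ σ : j < i}} (σ∪{i})*`. -/
noncomputable def dCtaux {m : ℕ} (K : Finset (Finset (Fin m))) (ω : Finset (Fin m)) (p : ℕ)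
    (b : CtB K ω p) : (CtB K ω (p + 1) →₀ ℤ) :=
  ∑ i ∈ (ω \ b.1).attach,
    if h : ∃ s ∈ K, s ∩ ω = insert i.1 b.1 then
      Finsupp.single
        ⟨insert i.1 b.1, h,
          by
            rw [Finset.card_insert_of_notMem (Finset.mem_sdiff.mp i.2).2, b.2.2]⟩
        ((-1 : ℤ) ^ (b.1.filter (fun j => j < i.1)).card)
    else 0

/-- The reduced simplicial coboundary `δ : C̃^{p−1}(K_ω) → C̃^{p}(K_ω)`. -/
noncomputable def dCt {m : ℕ} (K : Finset (Finset (Fin m))) (ω : Finset (Fin m)) (p : ℕ) :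
    (CtB K ω p →₀ ℤ) →ₗ[ℤ] (CtB K ω (p + 1) →₀ ℤ) :=
  Finsupp.lift _ ℤ _ (dCtaux K ω p)

/-- `λ_ω : T(K)|_ω^p → C̃^{p−1}(K_ω)`, `(σ, ω∖σ) ↦ σ*`. -/
noncomputable def lamOm {m : ℕ} (K : Finset (Finset (Fin m))) (ω : Finset (Fin m)) (p : ℕ) :
    (TωB K ω p →₀ ℤ) →ₗ[ℤ] (CtB K ω p →₀ ℤ) :=
  Finsupp.lift _ ℤ _ (fun b =>
    Finsupp.single
      ⟨b.1.1,
        ⟨b.1.1, b.2.1,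
          Finset.inter_eq_left.mpr (Finset.Subset.trans Finset.subset_union_left (le_of_eq b.2.2.2.1))⟩,
        b.2.2.2.2⟩
      (1 : ℤ))

def prevRange {M : ℕ → Type} [∀ p, AddCommGroup (M p)] [∀ p, Module ℤ (M p)]
    (d : ∀ p, M p →ₗ[ℤ] M (p + 1)) : ∀ p : ℕ, AddSubgroup (M p)
  | 0 => ⊥
  | p + 1 => AddMonoidHom.range (d p).toAddMonoidHom

abbrev Hgrp {M : ℕ → Type} [∀ p, AddCommGroup (M p)] [∀ p, Module ℤ (M p)]
    (d : ∀ p, M p →ₗ[ℤ] M (p + 1)) (p : ℕ) : Type :=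
  (d p).toAddMonoidHom.ker ⧸ (prevRange d p).addSubgroupOf (d p).toAddMonoidHom.ker


/-!
Since `K` is closed under subsets, the simplices of `K_ω` are exactly the faces `σ ∈ K` with
`σ ⊆ ω`, so `(σ, ω∖σ) ↦ σ` is a bijection of bases and `λ_ω` is the induced isomorphism of
free modules. Both differentials add a vertex `i ∈ ω∖σ` with the same sign, under the same
condition `σ ∪ {i} ∈ K`, so `λ_ω` is a chain map. A degreewise isomorphism commuting with the
differentials carries cycles onto cycles and boundaries onto boundaries, hence induces
isomorphisms in cohomology.
-/

namespace AddSubgroup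

variable {G G' : Type*} [AddGroup G] [AddGroup G']

lemma map_addSubgroupOf_addSubgroupMap (f : G ≃+ G') (A H : AddSubgroup G) :
    (A.addSubgroupOf H).map (f.addSubgroupMap H).toAddMonoidHom =
      (A.map (f : G →+ G')).addSubgroupOf (H.map (f : G →+ G')) := by
  ext ⟨y, hy⟩
  simp only [mem_addSubgroupOf, mem_map, Subtype.exists]
  constructor
  · rintro ⟨x, hxH, hxA, h⟩
    exact ⟨x, hxA, congrArg Subtype.val h⟩
  · rintro ⟨x, hxA, rfl⟩
    obtain ⟨x', hx'H, hx'⟩ := hy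
    obtain rfl : x' = x := f.injective hx'
    exact ⟨x', hx'H, hxA, rfl⟩

def quotientAddSubgroupOfCongr (f : G ≃+ G') {A H : AddSubgroup G} {A' H' : AddSubgroup G'}
    [(A.addSubgroupOf H).Normal] [(A'.addSubgroupOf H').Normal]
    (hA : A.map (f : G →+ G') = A') (hH : H.map (f : G →+ G') = H') :
    H ⧸ A.addSubgroupOf H ≃+ H' ⧸ A'.addSubgroupOf H' :=
  QuotientAddGroup.congr _ _ ((f.addSubgroupMap H).trans (AddEquiv.addSubgroupCongr hH)) <| by
    subst hA hH
    exact map_addSubgroupOf_addSubgroupMap f A H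

end AddSubgroup

section Transport

variable {M N : ℕ → Type} [∀ p, AddCommGroup (M p)] [∀ p, Module ℤ (M p)]
  [∀ p, AddCommGroup (N p)] [∀ p, Module ℤ (N p)]
  {dM : ∀ p, M p →ₗ[ℤ] M (p + 1)} {dN : ∀ p, N p →ₗ[ℤ] N (p + 1)}
  (e : ∀ p, M p ≃ₗ[ℤ] N p)
  (he : ∀ p, (e (p + 1)).toLinearMap ∘ₗ dM p = dN p ∘ₗ (e p).toLinearMap)
include he

lemma map_ker_eq_of_comp_eq (p : ℕ) :
    (dM p).toAddMonoidHom.ker.map ((e p).toAddEquiv : M p →+ N p) =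
      (dN p).toAddMonoidHom.ker := by
  have hcomm (x : M p) : e (p + 1) (dM p x) = dN p (e p x) := LinearMap.congr_fun (he p) x
  ext y
  simp only [AddSubgroup.mem_map, AddMonoidHom.mem_ker, LinearMap.toAddMonoidHom_coe]
  constructor
  · rintro ⟨x, hx, rfl⟩
    exact (hcomm x).symm.trans (by rw [hx, map_zero])
  · intro hy
    refine ⟨(e p).symm y, (e (p + 1)).injective ?_, (e p).apply_symm_apply y⟩
    rw [hcomm, LinearEquiv.apply_symm_apply, hy, map_zero]

lemma map_prevRange_eq_of_comp_eq (p : ℕ) :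
    (prevRange dM p).map ((e p).toAddEquiv : M p →+ N p) = prevRange dN p := by
  cases p with
  | zero => exact AddSubgroup.map_bot _
  | succ p =>
    have hcomm (x : M p) : e (p + 1) (dM p x) = dN p (e p x) := LinearMap.congr_fun (he p) x
    ext y
    simp only [prevRange, AddSubgroup.mem_map, AddMonoidHom.mem_range,
      LinearMap.toAddMonoidHom_coe]
    constructor
    · rintro ⟨_, ⟨x, rfl⟩, rfl⟩
      exact ⟨e p x, (hcomm x).symm⟩
    · rintro ⟨z, rfl⟩
      exact ⟨_, ⟨(e p).symm z, rfl⟩, (hcomm _).trans (by rw [LinearEquiv.apply_symm_apply])⟩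

def Hgrp.congr (p : ℕ) : Hgrp dM p ≃+ Hgrp dN p :=
  AddSubgroup.quotientAddSubgroupOfCongr (e p).toAddEquiv
    (map_prevRange_eq_of_comp_eq e he p) (map_ker_eq_of_comp_eq e he p)

end Transport

section FullSubcomplex

variable {m : ℕ} {K : Finset (Finset (Fin m))} {ω : Finset (Fin m)}

lemma TωB.snd_eq_sdiff {p : ℕ} (b : TωB K ω p) : b.1.2 = ω \ b.1.1 :=
  (Finset.union_sdiff_cancel_left b.2.2.1).symm.trans (congrArg (· \ b.1.1) b.2.2.2.1)

lemma TωB.fst_subset {p : ℕ} (b : TωB K ω p) : b.1.1 ⊆ ω :=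
  Finset.subset_union_left.trans b.2.2.2.1.le

lemma CtB.val_subset {p : ℕ} (c : CtB K ω p) : c.1 ⊆ ω := by
  obtain ⟨⟨s, -, hs⟩, -⟩ := c.2
  exact hs ▸ Finset.inter_subset_right

lemma exists_inter_eq_iff_mem (hKdown : ∀ σ ∈ K, ∀ τ ⊆ σ, τ ∈ K) {σ : Finset (Fin m)}
    (hσ : σ ⊆ ω) : (∃ s ∈ K, s ∩ ω = σ) ↔ σ ∈ K :=
  ⟨fun ⟨s, hs, hsσ⟩ => hKdown s hs σ (hsσ ▸ Finset.inter_subset_left),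
    fun h => ⟨σ, h, Finset.inter_eq_left.mpr hσ⟩⟩

variable (hKdown : ∀ σ ∈ K, ∀ τ ⊆ σ, τ ∈ K)
include hKdown

def TωB.equivCtB (p : ℕ) : TωB K ω p ≃ CtB K ω p where
  toFun b := ⟨b.1.1, ⟨b.1.1, b.2.1, Finset.inter_eq_left.mpr b.fst_subset⟩, b.2.2.2.2⟩
  invFun c :=
    ⟨(c.1, ω \ c.1), (exists_inter_eq_iff_mem hKdown c.val_subset).mp c.2.1,
      Finset.disjoint_sdiff, Finset.union_sdiff_of_subset c.val_subset, c.2.2⟩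
  left_inv b := Subtype.ext (Prod.ext rfl b.snd_eq_sdiff.symm)
  right_inv _ := rfl

lemma lamOm_eq_domLCongr (p : ℕ) :
    lamOm K ω p = (Finsupp.domLCongr (TωB.equivCtB hKdown p)).toLinearMap := by
  refine Finsupp.lhom_ext fun b c => ?_
  rw [lamOm, Finsupp.lift_apply, Finsupp.sum_single_index (by simp), LinearEquiv.coe_coe,
    Finsupp.domLCongr_single]
  exact Finsupp.smul_single_one _ _

lemma dCtaux_eq_domCongr_dTωaux (p : ℕ) (c : CtB K ω p) :
    dCtaux K ω p c =
      Finsupp.domCongr (TωB.equivCtB hKdown (p + 1))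
        (dTωaux K ω p ((TωB.equivCtB hKdown p).symm c)) := by
  unfold dTωaux dCtaux
  rw [map_sum]
  refine Finset.sum_congr rfl fun i _ => ?_
  have hiσ : insert i.1 c.1 ⊆ ω := Finset.insert_subset (Finset.mem_sdiff.mp i.2).1 c.val_subset
  split_ifs with hCt hT hT
  -- `erw`: inside `dCtaux` the index of `single` is elaborated at the unfolded subtype, not `CtB`.
  · erw [Finsupp.domCongr_apply, Finsupp.equivMapDomain_single]
    rfl
  · exact absurd ((exists_inter_eq_iff_mem hKdown hiσ).mp hCt) hT
  · exact absurd ((exists_inter_eq_iff_mem hKdown hiσ).mpr hT) hCt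
  · exact (map_zero _).symm

lemma lamOm_comp_dTω (p : ℕ) :
    lamOm K ω (p + 1) ∘ₗ dTω K ω p = dCt K ω p ∘ₗ lamOm K ω p := by
  refine Finsupp.lhom_ext fun b c => ?_
  simp only [LinearMap.comp_apply, lamOm_eq_domLCongr hKdown, LinearEquiv.coe_coe,
    Finsupp.domLCongr_single, dTω, dCt, Finsupp.lift_apply, Finsupp.sum_single_index, zero_smul,
    map_smul]
  rw [Finsupp.domLCongr_apply, dCtaux_eq_domCongr_dTωaux hKdown, Equiv.symm_apply_apply]

end FullSubcomplex

theorem lamOm_iso_of_complexes_general {m : ℕ} (K : Finset (Finset (Fin m)))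
    (hKdown : ∀ σ ∈ K, ∀ τ ⊆ σ, τ ∈ K) (ω : Finset (Fin m)) :
    (∀ p : ℕ, Function.Bijective (lamOm K ω p)) ∧
    (∀ p : ℕ, (lamOm K ω (p + 1)).comp (dTω K ω p) = (dCt K ω p).comp (lamOm K ω p)) ∧
    (∀ p : ℕ, Nonempty (Hgrp (dTω K ω) p ≃+ Hgrp (dCt K ω) p)) := by
  have hcomm := lamOm_comp_dTω (ω := ω) hKdown
  simp only [lamOm_eq_domLCongr hKdown] at hcomm ⊢
  exact ⟨fun p => LinearEquiv.bijective _, hcomm,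
    fun p => ⟨Hgrp.congr (fun q => Finsupp.domLCongr (TωB.equivCtB hKdown q)) hcomm p⟩⟩

/-- `λ_ω` is an isomorphism of cochain complexes (bijective in each degree and commuting
with the differentials), and induces isomorphisms `H^p(T(K)|_ω) ≅ H̃^{p−1}(K_ω)`. -/
theorem lamOm_iso_of_complexes {m : ℕ} (K : Finset (Finset (Fin m)))
    (hKempty : (∅ : Finset (Fin m)) ∈ K)
    (hKdown : ∀ σ ∈ K, ∀ τ ⊆ σ, τ ∈ K) (ω : Finset (Fin m)) :
    (∀ p : ℕ, Function.Bijective (lamOm K ω p)) ∧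
    (∀ p : ℕ, (lamOm K ω (p + 1)).comp (dTω K ω p) = (dCt K ω p).comp (lamOm K ω p)) ∧
    (∀ p : ℕ, Nonempty (Hgrp (dTω K ω) p ≃+ Hgrp (dCt K ω) p)) :=
  lamOm_iso_of_complexes_general K hKdown ω
end

section
/- Let K be the full simplex on [m] (every subset of [m] is a simplex). Then the map θ sending the basis element (σ,τ) of T(K) to the tensor e_1 ⊗ ⋯ ⊗ e_m, where e_i = u if i ∈ σ, e_i = t if i ∈ τ, and e_i = 𝟙 otherwise, is an isomorphism of cochain complexes T(K) ≅ D^{⊗m} onto the m-fold tensor product of the complex D over ℤ. -/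
/-!
STATEMENT 12: Let `K` be the full simplex on `[m]`.  The map `θ` sending the basis
element `(σ,τ)` of `T(K)` to the tensor `e_1 ⊗ ⋯ ⊗ e_m` (with `e_i = u` for `i ∈ σ`,
`e_i = t` for `i ∈ τ`, `e_i = 𝟙` otherwise) is an isomorphism of cochain complexes
from `T(K)` onto the `m`-fold tensor product `D^{⊗m}` over `ℤ`, where `D` is the
cochain complex with `D^0 = ℤ𝟙 ⊕ ℤt`, `D^1 = ℤu`, `d(𝟙) = 0`, `d(t) = u`, and tensor
products carry the Koszul sign rule `d(x ⊗ y) = dx ⊗ y + (−1)^{deg x} x ⊗ dy`.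

`D^{⊗m}` is presented in its canonical basis: the degree-`p` piece is free on the
functions `e : Fin m → Fin 3` (values `0 ↦ 𝟙`, `1 ↦ t`, `2 ↦ u`) with exactly `p`
values equal to `u`, and the Koszul-sign differential replaces one `t` by a `u`:
`d(e) = Σ_{i : e i = t} (−1)^{#{j < i : e j = u}} e[i ↦ u]`.
-/

def TB {m : ℕ} (K : Finset (Finset (Fin m))) (p : ℕ) : Type :=
  {x : Finset (Fin m) × Finset (Fin m) // x.1 ∈ K ∧ Disjoint x.1 x.2 ∧ x.1.card = p}

noncomputable def dTaux {m : ℕ} (K : Finset (Finset (Fin m))) (p : ℕ) (b : TB K p) :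
    (TB K (p + 1) →₀ ℤ) :=
  ∑ i ∈ b.1.2.attach,
    if h : insert i.1 b.1.1 ∈ K then
      Finsupp.single
        ⟨(insert i.1 b.1.1, b.1.2.erase i.1),
          h,
          Finset.disjoint_insert_left.mpr
            ⟨Finset.notMem_erase _ _, b.2.2.1.mono_right (Finset.erase_subset _ _)⟩,
          by
            rw [Finset.card_insert_of_notMem (Finset.disjoint_right.mp b.2.2.1 i.2), b.2.2.2]⟩
        ((-1 : ℤ) ^ (b.1.1.filter (fun j => j < i.1)).card)
    else 0

noncomputable def dT {m : ℕ} (K : Finset (Finset (Fin m))) (p : ℕ) :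
    (TB K p →₀ ℤ) →ₗ[ℤ] (TB K (p + 1) →₀ ℤ) :=
  Finsupp.lift _ ℤ _ (dTaux K p)

/-- The canonical basis of the degree-`p` piece of `D^{⊗m}`: pure tensors
`e_1 ⊗ ⋯ ⊗ e_m` of basis vectors (`0 ↦ 𝟙`, `1 ↦ t`, `2 ↦ u`) of total degree `p`. -/
def KoszulB (m p : ℕ) : Type :=
  {e : Fin m → Fin 3 // (Finset.univ.filter fun i => e i = 2).card = p}

/-- The Koszul differential of `D^{⊗m}` on a pure tensor:
`d(e) = Σ_{i : e_i = t} (−1)^{#{j < i : e_j = u}} e[i ↦ u]`. -/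
noncomputable def dKoszulAux (m p : ℕ) (b : KoszulB m p) : (KoszulB m (p + 1) →₀ ℤ) :=
  ∑ i ∈ (Finset.univ.filter fun i => b.1 i = 1).attach,
    Finsupp.single
      ⟨Function.update b.1 i.1 2, by
        have hi : b.1 i.1 = 1 := (Finset.mem_filter.mp i.2).2
        have hset : (Finset.univ.filter fun j => Function.update b.1 i.1 2 j = 2)
            = insert i.1 (Finset.univ.filter fun j => b.1 j = 2) := by
          ext j
          rcases eq_or_ne j i.1 with rfl | hj
          · simp
          · simp [Function.update_of_ne hj, hj]
        rw [hset, Finset.card_insert_of_notMem (by simp [hi]), b.2]⟩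
      ((-1 : ℤ) ^ (Finset.univ.filter fun j => j < i.1 ∧ b.1 j = 2).card)

/-- The differential of `D^{⊗m}`. -/
noncomputable def dKoszul (m p : ℕ) :
    (KoszulB m p →₀ ℤ) →ₗ[ℤ] (KoszulB m (p + 1) →₀ ℤ) :=
  Finsupp.lift _ ℤ _ (dKoszulAux m p)

/-- The pure tensor associated with a basis element `(σ,τ)` of `T(K)`:
`e_i = u (= 2)` for `i ∈ σ`, `e_i = t (= 1)` for `i ∈ τ`, `e_i = 𝟙 (= 0)` otherwise. -/
def toKoszulFun {m : ℕ} (σ τ : Finset (Fin m)) : Fin m → Fin 3 :=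
  fun i => if i ∈ σ then 2 else if i ∈ τ then 1 else 0

/-- `θ : T(K)^p → (D^{⊗m})^p`, `(σ,τ) ↦ e_1 ⊗ ⋯ ⊗ e_m`. -/
noncomputable def theta {m : ℕ} (K : Finset (Finset (Fin m))) (p : ℕ) :
    (TB K p →₀ ℤ) →ₗ[ℤ] (KoszulB m p →₀ ℤ) :=
  Finsupp.lift _ ℤ _ (fun b =>
    Finsupp.single
      ⟨toKoszulFun b.1.1 b.1.2, by
        have h : (Finset.univ.filter fun i => toKoszulFun b.1.1 b.1.2 i = 2) = b.1.1 := by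
          ext i
          by_cases h1 : i ∈ b.1.1
          · simp [toKoszulFun, h1]
          · by_cases h2 : i ∈ b.1.2 <;> simp [toKoszulFun, h1, h2]
        rw [h, b.2.2.2]⟩
      (1 : ℤ))

/-!
On basis elements `θ` is the map `(σ, τ) ↦ e` with `σ = e⁻¹(u)` and `τ = e⁻¹(t)`, so it is
injective for every `K`; for the full simplex every disjoint pair `(σ, τ)` is allowed, so it is
onto. Moving `i ∈ τ` into `σ` is the same as changing `e_i` from `t` to `u`, and both differentials
attach to this move the sign `(-1)^{#{j ∈ σ : j < i}}`; once no face condition can fail, the two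
differentials agree term by term.
-/

open Finset

section
variable {m : ℕ}

lemma toKoszulFun_eq_two_iff (σ τ : Finset (Fin m)) (i : Fin m) :
    toKoszulFun σ τ i = 2 ↔ i ∈ σ := by
  unfold toKoszulFun
  split_ifs <;> simp_all

lemma toKoszulFun_eq_one_iff {σ τ : Finset (Fin m)} (h : Disjoint σ τ) (i : Fin m) :
    toKoszulFun σ τ i = 1 ↔ i ∈ τ := by
  by_cases hσ : i ∈ σ
  · simp [toKoszulFun, hσ, disjoint_left.mp h hσ]
  · by_cases hτ : i ∈ τ <;> simp [toKoszulFun, hσ, hτ]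

lemma filter_toKoszulFun_eq_two (σ τ : Finset (Fin m)) :
    univ.filter (fun i => toKoszulFun σ τ i = 2) = σ := by
  ext i
  simp [toKoszulFun_eq_two_iff]

lemma filter_toKoszulFun_eq_one {σ τ : Finset (Fin m)} (h : Disjoint σ τ) :
    univ.filter (fun i => toKoszulFun σ τ i = 1) = τ := by
  ext i
  simp [toKoszulFun_eq_one_iff h]

lemma toKoszulFun_filter (e : Fin m → Fin 3) :
    toKoszulFun (univ.filter (e · = 2)) (univ.filter (e · = 1)) = e := by
  funext i
  simp only [toKoszulFun, mem_filter, mem_univ, true_and]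
  generalize e i = a
  fin_cases a <;> simp

lemma toKoszulFun_insert_erase (σ : Finset (Fin m)) {τ : Finset (Fin m)} {a : Fin m}
    (ha : a ∈ τ) :
    toKoszulFun (insert a σ) (τ.erase a) = Function.update (toKoszulFun σ τ) a 2 := by
  funext j
  rcases eq_or_ne j a with rfl | hj
  · simp [toKoszulFun]
  · simp [toKoszulFun, hj]

def thetaBasis {K : Finset (Finset (Fin m))} {p : ℕ} (b : TB K p) : KoszulB m p :=
  ⟨toKoszulFun b.1.1 b.1.2, by rw [filter_toKoszulFun_eq_two, b.2.2.2]⟩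

lemma thetaBasis_injective (K : Finset (Finset (Fin m))) (p : ℕ) :
    Function.Injective (thetaBasis (K := K) (p := p)) := by
  intro b c h
  have h' : toKoszulFun b.1.1 b.1.2 = toKoszulFun c.1.1 c.1.2 := congrArg Subtype.val h
  apply Subtype.ext
  apply Prod.ext
  · rw [← filter_toKoszulFun_eq_two b.1.1 b.1.2, h', filter_toKoszulFun_eq_two]
  · rw [← filter_toKoszulFun_eq_one b.2.2.1, h', filter_toKoszulFun_eq_one c.2.2.1]

lemma thetaBasis_surjective {K : Finset (Finset (Fin m))} (hK : ∀ σ, σ ∈ K) (p : ℕ) :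
    Function.Surjective (thetaBasis (K := K) (p := p)) := by
  intro e
  have hdisj : Disjoint (univ.filter (e.1 · = 2)) (univ.filter (e.1 · = 1)) :=
    disjoint_filter.mpr fun _ _ h2 h1 => by simp [h2] at h1
  exact ⟨⟨(univ.filter (e.1 · = 2), univ.filter (e.1 · = 1)), hK _, hdisj, e.2⟩,
    Subtype.ext (toKoszulFun_filter e.1)⟩

lemma theta_single (K : Finset (Finset (Fin m))) {p : ℕ} (b : TB K p) (c : ℤ) :
    theta K p (Finsupp.single b c) = Finsupp.single (thetaBasis b) c := by
  simp only [theta, Finsupp.lift_apply, Finsupp.sum_single_index, zero_smul]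
  exact Finsupp.smul_single_one _ _

lemma theta_eq_lmapDomain (K : Finset (Finset (Fin m))) (p : ℕ) :
    theta K p = Finsupp.lmapDomain ℤ ℤ thetaBasis :=
  Finsupp.lhom_ext fun b c => by
    rw [theta_single, Finsupp.lmapDomain_apply, Finsupp.mapDomain_single]

lemma theta_dTaux {K : Finset (Finset (Fin m))} (hK : ∀ σ, σ ∈ K) {p : ℕ} (b : TB K p) :
    theta K (p + 1) (dTaux K p b) = dKoszulAux m p (thetaBasis b) := by
  have hτ : ∀ i, i ∈ b.1.2 ↔ i ∈ univ.filter fun i => (thetaBasis b).1 i = 1 := fun i => by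
    rw [thetaBasis, filter_toKoszulFun_eq_one b.2.2.1]
  rw [dTaux, map_sum, dKoszulAux]
  refine sum_equiv (Equiv.subtypeEquivRight hτ) (by simp) fun i _ => ?_
  rw [dif_pos (hK _)]
  refine (theta_single K _ _).trans ?_
  congr 1
  · exact Subtype.ext (toKoszulFun_insert_erase b.1.1 i.2)
  · congr 2
    ext j
    simp only [mem_filter, mem_univ, true_and]
    exact and_comm.trans (and_congr_right fun _ => (toKoszulFun_eq_two_iff _ _ j).symm)

lemma theta_comp_dT {K : Finset (Finset (Fin m))} (hK : ∀ σ, σ ∈ K) (p : ℕ) :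
    (theta K (p + 1)).comp (dT K p) = (dKoszul m p).comp (theta K p) := by
  refine Finsupp.lhom_ext' fun b => LinearMap.ext_ring ?_
  simp only [LinearMap.comp_apply, Finsupp.lsingle_apply, theta_single, dT, dKoszul,
    Finsupp.lift_apply, Finsupp.sum_single_index, zero_smul, one_smul]
  exact theta_dTaux hK b

end

/-- For the full simplex `K`, `θ` is an isomorphism of cochain complexes
`T(K) ≅ D^{⊗m}`: bijective in each degree and commuting with the differentials. -/
theorem theta_iso_T_full_simplex_with_Koszul {m : ℕ} (K : Finset (Finset (Fin m)))
    (hKfull : ∀ σ : Finset (Fin m), σ ∈ K) :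
    (∀ p : ℕ, Function.Bijective (theta K p)) ∧
    (∀ p : ℕ, (theta K (p + 1)).comp (dT K p) = (dKoszul m p).comp (theta K p)) := by
  refine ⟨fun p => ?_, theta_comp_dT hKfull⟩
  rw [theta_eq_lmapDomain]
  exact ⟨Finsupp.mapDomain_injective (thetaBasis_injective K p),
    Finsupp.mapDomain_surjective (thetaBasis_surjective hKfull p)⟩
end

section
/- If {i} ∈ K for every i ∈ [m], then H^0(T(K)) is infinite cyclic, generated by the class of the basis element (∅,∅): H^0(T(K)) ≅ ℤ. -/
section

variable {m : ℕ} {K : Finset (Finset (Fin m))}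

namespace TB

lemma fst_eq_empty (b : TB K 0) : b.1.1 = ∅ :=
  Finset.card_eq_zero.mp b.2.2.2

lemma ext_of_snd_eq {a b : TB K 0} (h : a.1.2 = b.1.2) : a = b :=
  Subtype.ext (Prod.ext (by rw [a.fst_eq_empty, b.fst_eq_empty]) h)

def empty (hK : (∅ : Finset (Fin m)) ∈ K) : TB K 0 :=
  ⟨(∅, ∅), hK, Finset.disjoint_empty_left _, Finset.card_empty⟩

def moveVertex (b : TB K 0) (i : Fin m) (hi : ({i} : Finset (Fin m)) ∈ K) : TB K 1 :=
  ⟨({i}, b.1.2.erase i), hi, by simp, Finset.card_singleton i⟩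

end TB

lemma dTaux_apply {p : ℕ} (a : TB K p) (c : TB K (p + 1)) :
    dTaux K p a c = ∑ j ∈ a.1.2,
      if (insert j a.1.1, a.1.2.erase j) = c.1 then
        (-1 : ℤ) ^ (a.1.1.filter (fun k => k < j)).card
      else 0 := by
  classical
  rw [dTaux, Finsupp.finsetSum_apply, ← Finset.sum_attach a.1.2]
  refine Finset.sum_congr rfl fun j _ => ?_
  split_ifs with hK hc hc
  · exact (Finsupp.single_apply ..).trans (if_pos (Subtype.ext hc))
  · exact (Finsupp.single_apply ..).trans (if_neg fun h => hc (congrArg Subtype.val h))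
  · have hσ : insert j.1 a.1.1 = c.1.1 := congrArg Prod.fst hc
    exact absurd (hσ ▸ c.2.1) hK
  · rfl

lemma dTaux_eq_zero_of_snd_eq_empty {p : ℕ} (b : TB K p) (hb : b.1.2 = ∅) : dTaux K p b = 0 := by
  rw [dTaux]
  exact Finset.sum_eq_zero fun j _ => absurd j.2 (by simp [hb])

open Classical in
lemma dTaux_zero_apply_moveVertex (a b : TB K 0) {i : Fin m} (hib : i ∈ b.1.2)
    (hi : ({i} : Finset (Fin m)) ∈ K) :
    dTaux K 0 a (b.moveVertex i hi) = if a = b then 1 else 0 := by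
  have hsplit : ∀ j, (insert j a.1.1, a.1.2.erase j) = (b.moveVertex i hi).1 ↔
      j = i ∧ a.1.2.erase i = b.1.2.erase i := by
    intro j
    simp only [TB.moveVertex, a.fst_eq_empty, Finset.insert_empty, Prod.mk.injEq,
      Finset.singleton_inj]
    constructor <;> rintro ⟨rfl, h⟩ <;> exact ⟨rfl, h⟩
  have hsame : (i ∈ a.1.2 ∧ a.1.2.erase i = b.1.2.erase i) ↔ a = b := by
    refine ⟨fun h => TB.ext_of_snd_eq (Finset.erase_injOn' i h.1 hib h.2), ?_⟩
    rintro rfl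
    exact ⟨hib, rfl⟩
  simp_rw [dTaux_apply, hsplit, a.fst_eq_empty, Finset.filter_empty, Finset.card_empty,
    pow_zero, ite_and, Finset.sum_ite_eq', ← ite_and, hsame]

lemma dT_zero_apply_moveVertex (f : TB K 0 →₀ ℤ) (b : TB K 0) {i : Fin m} (hib : i ∈ b.1.2)
    (hi : ({i} : Finset (Fin m)) ∈ K) :
    dT K 0 f (b.moveVertex i hi) = f b := by
  classical
  rw [dT, Finsupp.lift_apply, Finsupp.sum_apply]
  simp only [Finsupp.smul_apply, dTaux_zero_apply_moveVertex _ _ hib, smul_eq_mul, mul_ite,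
    mul_one, mul_zero]
  exact Finsupp.sum_ite_self_eq' f b

lemma eq_single_empty_of_dT_zero_eq_zero (hvert : ∀ i : Fin m, ({i} : Finset (Fin m)) ∈ K)
    (hK : (∅ : Finset (Fin m)) ∈ K) {f : TB K 0 →₀ ℤ} (hf : dT K 0 f = 0) :
    f = Finsupp.single (TB.empty hK) (f (TB.empty hK)) := by
  ext b
  by_cases hb : b = TB.empty hK
  · rw [hb, Finsupp.single_eq_same]
  obtain ⟨i, hib⟩ : b.1.2.Nonempty :=
    Finset.nonempty_iff_ne_empty.mpr fun h => hb (TB.ext_of_snd_eq h)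
  rw [Finsupp.single_eq_of_ne hb, ← dT_zero_apply_moveVertex f b hib (hvert i), hf,
    Finsupp.zero_apply]

lemma dT_zero_single_empty (hK : (∅ : Finset (Fin m)) ∈ K) (n : ℤ) :
    dT K 0 (Finsupp.single (TB.empty hK) n) = 0 := by
  rw [dT, Finsupp.lift_apply, Finsupp.sum_single_index (h := fun b r => r • dTaux K 0 b)
    (zero_smul ℤ _), dTaux_eq_zero_of_snd_eq_empty _ rfl, smul_zero]

noncomputable def zeroCocyclesEquivInt (hvert : ∀ i : Fin m, ({i} : Finset (Fin m)) ∈ K)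
    (hK : (∅ : Finset (Fin m)) ∈ K) : (dT K 0).toAddMonoidHom.ker ≃+ ℤ :=
  AddEquiv.ofBijective
    ((Finsupp.applyAddHom (TB.empty hK)).comp (dT K 0).toAddMonoidHom.ker.subtype)
    ⟨(injective_iff_map_eq_zero _).mpr fun z hz => Subtype.ext <| by
        rw [eq_single_empty_of_dT_zero_eq_zero hvert hK z.2]
        simpa using hz,
      fun n => ⟨⟨_, dT_zero_single_empty hK n⟩, Finsupp.single_eq_same⟩⟩

end

namespace Hgrp

variable {M : ℕ → Type} [∀ p, AddCommGroup (M p)] [∀ p, Module ℤ (M p)]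

def zeroEquivKer (d : ∀ p, M p →ₗ[ℤ] M (p + 1)) : Hgrp d 0 ≃+ (d 0).toAddMonoidHom.ker :=
  (QuotientAddGroup.quotientAddEquivOfEq (AddSubgroup.bot_addSubgroupOf _)).trans
    QuotientAddGroup.quotientBot

end Hgrp

namespace AddEquiv

variable {G : Type*} [AddGroup G]

lemma eq_zsmul_of_apply_eq_one (e : G ≃+ ℤ) {g : G} (hg : e g = 1) (x : G) : x = e x • g :=
  e.injective (by rw [map_zsmul, hg, smul_eq_mul, mul_one])

lemma eq_zero_of_zsmul_eq_zero (e : G ≃+ ℤ) {g : G} (hg : e g = 1) {n : ℤ} (h : n • g = 0) :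
    n = 0 := by
  simpa [hg] using congrArg e h

end AddEquiv

theorem H0_of_T_infinite_cyclic_general {m : ℕ} (K : Finset (Finset (Fin m)))
    (hKempty : (∅ : Finset (Fin m)) ∈ K)
    (hvert : ∀ i : Fin m, ({i} : Finset (Fin m)) ∈ K) :
    ∃ h : (Finsupp.single
        (⟨(∅, ∅), hKempty, Finset.disjoint_empty_left _, Finset.card_empty⟩ : TB K 0)
        (1 : ℤ)) ∈ (dT K 0).toAddMonoidHom.ker,
      (∀ x : Hgrp (dT K) 0, ∃ n : ℤ,
          x = n • (QuotientAddGroup.mk ⟨_, h⟩ : Hgrp (dT K) 0)) ∧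
      (∀ n : ℤ, n • (QuotientAddGroup.mk ⟨_, h⟩ : Hgrp (dT K) 0) = 0 → n = 0) ∧
      Nonempty (Hgrp (dT K) 0 ≃+ ℤ) := by
  have h := dT_zero_single_empty hKempty 1
  let e := (Hgrp.zeroEquivKer (dT K)).trans (zeroCocyclesEquivInt hvert hKempty)
  have he : e (QuotientAddGroup.mk ⟨_, h⟩) = 1 := Finsupp.single_eq_same
  exact ⟨h, fun x => ⟨e x, e.eq_zsmul_of_apply_eq_one he x⟩,
    fun _ => e.eq_zero_of_zsmul_eq_zero he, ⟨e⟩⟩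

/-- If every singleton `{i}` is a simplex of `K`, then `H^0(T(K))` is infinite cyclic,
generated by the class of the basis element `(∅, ∅)`. -/
theorem H0_of_T_infinite_cyclic {m : ℕ} (K : Finset (Finset (Fin m)))
    (hKempty : (∅ : Finset (Fin m)) ∈ K)
    (hKdown : ∀ σ ∈ K, ∀ τ ⊆ σ, τ ∈ K)
    (hvert : ∀ i : Fin m, ({i} : Finset (Fin m)) ∈ K) :
    ∃ h : (Finsupp.single
        (⟨(∅, ∅), hKempty, Finset.disjoint_empty_left _, Finset.card_empty⟩ : TB K 0)
        (1 : ℤ)) ∈ (dT K 0).toAddMonoidHom.ker,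
      (∀ x : Hgrp (dT K) 0, ∃ n : ℤ,
          x = n • (QuotientAddGroup.mk ⟨_, h⟩ : Hgrp (dT K) 0)) ∧
      (∀ n : ℤ, n • (QuotientAddGroup.mk ⟨_, h⟩ : Hgrp (dT K) 0) = 0 → n = 0) ∧
      Nonempty (Hgrp (dT K) 0 ≃+ ℤ) :=
  H0_of_T_infinite_cyclic_general K hKempty hvert
end
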